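/- Let n≥0 and r≥0 be integers, β=(β_1,…,β_m) a weak composition of n, and α=(α_1,…,α_k) a strong composition of n+r with k≥1 parts. Then D^{inv}_{r;β,α}(q) = Σ_S q^{Σ_{i=min(S)+1}^{m}(β_i−χ_S(i))} · D^{inv+}_{r;β−χ_S,α^-}(q), where the sum is over all subsets S of {1,…,m} with |S|=α_k and χ_S ≤ β componentwise, χ_S∈{0,1}^m is the indicator vector of S, β−χ_S is the componentwise difference, and α^-=(α_1,…,α_{k−1}). -/

import Mathlib

open scoped BigOperators

namespace omp

/-- The multiset `A(β) ∪ {0^r}`: the letter `i` (for `1 ≤ i ≤ m`) with multiplicity `β_i`,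
together with `r` copies of the letter `0`. -/
def content (r : ℕ) (β : List ℕ) : Multiset ℕ :=
  Multiset.replicate r 0 +
    ∑ i ∈ Finset.range β.length, Multiset.replicate (β.getD i 0) (i + 1)

/-- `π` is an ordered multiset partition of `A(β) ∪ {0^r}` into `k` (nonempty) blocks,
with `0` allowed anywhere: the set `OP^all_{r;β,k}`. -/
def IsOPall (r : ℕ) (β : List ℕ) (k : ℕ) (π : List (Finset ℕ)) : Prop :=
  π.length = k ∧ (∀ B ∈ π, B.Nonempty) ∧ (π.map Finset.val).sum = content r β

/-- Additionally, the last block does not contain `0`: the set `OP_{r;β,k}`. -/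
def IsOP (r : ℕ) (β : List ℕ) (k : ℕ) (π : List (Finset ℕ)) : Prop :=
  IsOPall r β k π ∧ 0 ∉ π.getLastD ∅

/-- Ordered multiset partitions of `A(β) ∪ {0^r}` with shape `α`: `OP^all_{r;β,α}`. -/
def IsOPallSh (r : ℕ) (β α : List ℕ) (π : List (Finset ℕ)) : Prop :=
  (∀ B ∈ π, B.Nonempty) ∧ (π.map Finset.val).sum = content r β ∧
    π.map Finset.card = α

/-- Shape `α` and last block avoiding `0`: `OP_{r;β,α}`. -/
def IsOPSh (r : ℕ) (β α : List ℕ) (π : List (Finset ℕ)) : Prop :=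
  IsOPallSh r β α π ∧ 0 ∉ π.getLastD ∅

/-- The `i`-th block (0-indexed). -/
def blk (π : List (Finset ℕ)) (i : ℕ) : Finset ℕ := π.getD i ∅

/-- `inv`: pairs of a letter `a` in block `B_i` and the minimum `b` of a later block `B_j`
with `a > b`. -/
def inv (π : List (Finset ℕ)) : ℕ :=
  ∑ i ∈ Finset.range π.length, ∑ j ∈ Finset.range π.length,
    if i < j then
      (@Finset.filter ℕ (fun (a : ℕ) => (blk π j).min < (a : WithBot ℕ))
          (fun _ => WithTop.decidableLT _ _) (blk π i)).card
    else 0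

/-- The word `σ(π)`: each block written in decreasing order, blocks concatenated. -/
def sigmaWord (π : List (Finset ℕ)) : List ℕ :=
  (π.map (fun B => (B.sort (· ≤ ·)).reverse)).flatten

/-- The word `ind(π) = 0^{|B_1|} 1^{|B_2|} ⋯ (k-1)^{|B_k|}`. -/
def indWord (π : List (Finset ℕ)) : List ℕ :=
  (π.zipIdx.map (fun p => List.replicate p.1.card p.2)).flatten

/-- The major index of a word (positions are 1-based). -/
def majW (w : List ℕ) : ℕ :=
  ∑ i ∈ Finset.range (w.length - 1),
    if w.getD (i + 1) 0 < w.getD i 0 then i + 1 else 0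

/-- `maj(π)`: the sum of `ind(π)_{i+1}` over descents `σ_i > σ_{i+1}` of `σ(π)`. -/
def maj (π : List (Finset ℕ)) : ℕ :=
  ∑ i ∈ Finset.range ((sigmaWord π).length - 1),
    if (sigmaWord π).getD (i + 1) 0 < (sigmaWord π).getD i 0 then
      (indWord π).getD (i + 1) 0
    else 0

/-- `dinv(π)`: primary and secondary diagonal inversions, where `B_i^h` is the `h`-th smallest
element of block `B_i` (here `h` is 0-indexed). -/
def dinv (π : List (Finset ℕ)) : ℕ :=
  ∑ i ∈ Finset.range π.length, ∑ j ∈ Finset.range π.length,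
    if i < j then
      ((Finset.range (blk π i).card).filter (fun h =>
          h < (blk π j).card ∧
            ((blk π j).sort (· ≤ ·)).getD h 0 < ((blk π i).sort (· ≤ ·)).getD h 0)).card +
      ((Finset.range (blk π i).card).filter (fun h =>
          h + 1 < (blk π j).card ∧
            ((blk π j).sort (· ≤ ·)).getD (h + 1) 0 < ((blk π i).sort (· ≤ ·)).getD h 0)).card
    else 0

/-- `miniword(π)`, built from right to left: the last block in increasing order; inductively,
if the word built so far begins with `s`, block `B_i` contributes its elements greater than `s`
in increasing order followed by its elements at most `s` in increasing order. -/
def miniword : List (Finset ℕ) → List ℕ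
  | [] => []
  | B :: rest =>
    match miniword rest with
    | [] => B.sort (· ≤ ·)
    | s :: w =>
        ((B.filter (fun x => s < x)).sort (· ≤ ·) ++
          (B.filter (fun x => x ≤ s)).sort (· ≤ ·)) ++ s :: w

/-- `minimaj(π) = maj(miniword(π))`. -/
def minimaj (π : List (Finset ℕ)) : ℕ := majW (miniword π)

/-- `D^{stat}_{r;β,k}(q) = Σ_{π ∈ OP_{r;β,k}} q^{stat(π)}` (the set is finite, so the
finite-support sum below is the intended polynomial). -/
noncomputable def D (r : ℕ) (β : List ℕ) (k : ℕ)
    (stat : List (Finset ℕ) → ℕ) : Polynomial ℕ :=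
  ∑ᶠ π ∈ {π | IsOP r β k π}, Polynomial.X ^ stat π

/-- `D^{stat+}_{r;β,k}(q) = Σ_{π ∈ OP^all_{r;β,k}} q^{stat(π)}`. -/
noncomputable def Dall (r : ℕ) (β : List ℕ) (k : ℕ)
    (stat : List (Finset ℕ) → ℕ) : Polynomial ℕ :=
  ∑ᶠ π ∈ {π | IsOPall r β k π}, Polynomial.X ^ stat π

/-- `D^{stat}_{r;β,α}(q)`, the shape-refined generating function. -/
noncomputable def DSh (r : ℕ) (β α : List ℕ)
    (stat : List (Finset ℕ) → ℕ) : Polynomial ℕ :=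
  ∑ᶠ π ∈ {π | IsOPSh r β α π}, Polynomial.X ^ stat π

/-- `D^{stat+}_{r;β,α}(q)`, the shape-refined generating function with `0` allowed
in the last block. -/
noncomputable def DallSh (r : ℕ) (β α : List ℕ)
    (stat : List (Finset ℕ) → ℕ) : Polynomial ℕ :=
  ∑ᶠ π ∈ {π | IsOPallSh r β α π}, Polynomial.X ^ stat π

end omp


namespace omp

/-- The list `β − χ_S`: subtract `1` from `β_i` (1-indexed) for each `i ∈ S`. -/
def subInd (β : List ℕ) (S : Finset ℕ) : List ℕ :=
  (List.range β.length).map (fun i => β.getD i 0 - if i + 1 ∈ S then 1 else 0)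

/-- The exponent `Σ_{i = min(S)+1}^{m} (β_i − χ_S(i))`. -/
def wExp (β : List ℕ) (S : Finset ℕ) : ℕ :=
  ∑ i ∈ @Finset.filter ℕ (fun (i : ℕ) => S.min < (i : WithBot ℕ))
      (fun _ => WithTop.decidableLT _ _) (Finset.Icc 1 β.length),
    (β.getD (i - 1) 0 - if i ∈ S then 1 else 0)

end omp

/-!
Removing the last block `S` of `π ∈ OP_{r;β,α}` is a bijection onto the pairs `(S, π')` with
`S ⊆ {1,…,m}`, `|S| = α_k`, `χ_S ≤ β` and `π' ∈ OP^all_{r;β−χ_S,α^-}`: the last block avoids `0`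
exactly when it is a set of letters of `A(β)`. Since `S` comes last, the only inversions of `π`
not already inversions of `π'` pair `min S` with the letters of `π'` exceeding it, and these
letters form the part of `A(β−χ_S) ∪ {0^r}` above `min S`, of size `Σ_{i>min S} (β_i − χ_S(i))`.
-/

namespace omp

/-- `inv` and `wExp` compare `Finset.min : WithTop ℕ` with a letter cast to `WithBot ℕ`, using
this instance. -/
instance instDecidableLtCastWithBot (s : WithTop ℕ) (a : ℕ) : Decidable (s < (a : WithBot ℕ)) :=
  WithTop.decidableLT _ _

lemma min_not_lt_cast_zero (S : Finset ℕ) : ¬ S.min < ((0 : ℕ) : WithBot ℕ) :=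
  not_lt_bot

lemma count_content (r : ℕ) (β : List ℕ) (x : ℕ) :
    (content r β).count x = if x = 0 then r else β.getD (x - 1) 0 := by
  simp only [content, Multiset.count_add, Multiset.count_sum', Multiset.count_replicate]
  rcases Nat.eq_zero_or_pos x with rfl | hx
  · simp
  · have hshift : ∀ i, (i + 1 = x) ↔ (i = x - 1) := fun i => by omega
    simp only [hshift, Finset.sum_ite_eq', Finset.mem_range, if_neg hx.ne, if_neg hx.ne',
      zero_add]
    split_ifs with hlt
    · rfl
    · exact (List.getD_eq_default _ _ (by omega)).symm

lemma subInd_length (β : List ℕ) (S : Finset ℕ) : (subInd β S).length = β.length := by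
  simp [subInd]

lemma subInd_getD (β : List ℕ) (S : Finset ℕ) (i : ℕ) :
    (subInd β S).getD i 0 = β.getD i 0 - if i + 1 ∈ S then 1 else 0 := by
  by_cases hi : i < β.length <;> simp [subInd, hi]

lemma content_subInd_add {S : Finset ℕ} {β : List ℕ} (h0 : 0 ∉ S)
    (hb : ∀ i ∈ S, 1 ≤ β.getD (i - 1) 0) (r : ℕ) :
    content r (subInd β S) + S.val = content r β := by
  ext x
  rw [Multiset.count_add, count_content, count_content, Multiset.count_eq_of_nodup S.nodup]
  rcases Nat.eq_zero_or_pos x with rfl | hx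
  · simp [h0]
  · have hx1 : x - 1 + 1 = x := by omega
    rw [if_neg hx.ne', if_neg hx.ne', subInd_getD, hx1]
    by_cases hxS : x ∈ S
    · have := hb x hxS
      simp only [Finset.mem_val, hxS, if_true]
      omega
    · simp [hxS]

lemma countP_content (p : ℕ → Prop) [DecidablePred p] (hp : ¬ p 0) (r : ℕ) (β : List ℕ) :
    (content r β).countP p = ∑ i ∈ Finset.Icc 1 β.length with p i, β.getD (i - 1) 0 := by
  rw [content, Multiset.countP_add, ← Multiset.coe_countPAddMonoidHom, map_sum]
  simp only [Multiset.coe_countPAddMonoidHom, ← Multiset.coe_replicate, Multiset.coe_countP,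
    List.countP_replicate, decide_eq_true_eq, if_neg hp, zero_add]
  rw [Finset.sum_filter, ← Finset.Ico_add_one_right_eq_Icc, ← Nat.Ico_zero_eq_range,
    ← Finset.sum_Ico_add' _ 0 _ 1]
  simp only [Nat.add_sub_cancel]

lemma countP_content_subInd (r : ℕ) (β : List ℕ) (S : Finset ℕ) :
    (content r (subInd β S)).countP (fun a : ℕ => S.min < (a : WithBot ℕ)) = wExp β S := by
  rw [countP_content _ (min_not_lt_cast_zero S), subInd_length, wExp]
  refine Finset.sum_congr rfl fun i hi => ?_
  have hi1 : i - 1 + 1 = i := by have := (Finset.mem_Icc.1 (Finset.mem_filter.1 hi).1).1; omega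
  rw [subInd_getD, hi1]

lemma blk_append_singleton_of_lt (π : List (Finset ℕ)) (S : Finset ℕ) {i : ℕ}
    (hi : i < π.length) : blk (π ++ [S]) i = blk π i :=
  List.getD_append _ _ _ _ hi

lemma blk_append_singleton_length (π : List (Finset ℕ)) (S : Finset ℕ) :
    blk (π ++ [S]) π.length = S := by
  simp [blk]

lemma sum_card_filter_blk (p : ℕ → Prop) [DecidablePred p] :
    ∀ π : List (Finset ℕ),
      ∑ i ∈ Finset.range π.length, ((blk π i).filter p).card = (π.map Finset.val).sum.countP p
  | [] => rfl
  | B :: π => by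
    rw [List.length_cons, Finset.sum_range_succ', List.map_cons, List.sum_cons,
      Multiset.countP_add, ← sum_card_filter_blk p π, add_comm, Multiset.countP_eq_card_filter]
    rfl

lemma inv_append_singleton (π : List (Finset ℕ)) (S : Finset ℕ) :
    inv (π ++ [S]) =
      inv π + (π.map Finset.val).sum.countP (fun a : ℕ => S.min < (a : WithBot ℕ)) := by
  rw [← sum_card_filter_blk, inv, inv, List.length_append, List.length_singleton,
    Finset.sum_range_succ, ← Finset.sum_add_distrib]
  rw [Finset.sum_eq_zero fun j hj => if_neg (by simp at hj; omega), add_zero]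
  refine Finset.sum_congr rfl fun i hi => ?_
  have hi := Finset.mem_range.1 hi
  rw [Finset.sum_range_succ, blk_append_singleton_length, if_pos hi,
    blk_append_singleton_of_lt _ _ hi]
  congr 1
  refine Finset.sum_congr rfl fun j hj => ?_
  rw [blk_append_singleton_of_lt _ _ (Finset.mem_range.1 hj)]

lemma inv_append_singleton_of_sum_eq {r : ℕ} {β : List ℕ} {S : Finset ℕ} {π : List (Finset ℕ)}
    (h : (π.map Finset.val).sum = content r (subInd β S)) :
    inv (π ++ [S]) = wExp β S + inv π := by
  rw [inv_append_singleton, h, countP_content_subInd, add_comm]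

lemma finite_setOf_length_eq_sum_val_eq {α : Type*} (n : ℕ) (M : Multiset α) :
    {π : List (Finset α) | π.length = n ∧ (π.map Finset.val).sum = M}.Finite := by
  classical
  refine ((List.finite_length_eq M.toFinset.powerset n).image
    (List.map Subtype.val)).subset fun π ⟨hlen, hsum⟩ => ?_
  have hπ : ∀ B ∈ π, B ∈ M.toFinset.powerset := fun B hB =>
    Finset.mem_powerset.2 fun x hx => Multiset.mem_toFinset.2 <|
      Multiset.mem_of_le (hsum ▸ List.le_sum_of_mem (List.mem_map_of_mem hB)) hx
  lift π to List M.toFinset.powerset using hπ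
  exact ⟨π, by simpa using hlen, rfl⟩

lemma finite_setOf_isOPallSh (r : ℕ) (β α : List ℕ) : {π | IsOPallSh r β α π}.Finite :=
  (finite_setOf_length_eq_sum_val_eq α.length (content r β)).subset
    fun π ⟨_, hsum, hshape⟩ => ⟨by rw [← hshape, List.length_map], hsum⟩

lemma getLastD_eq_getLast {γ : Type*} {l : List γ} (d : γ) (hl : l ≠ []) :
    l.getLastD d = l.getLast hl := by
  rw [List.getLastD_eq_getLast?, List.getLast?_eq_some_getLast hl, Option.getD_some]

lemma append_singleton_eq_iff {γ : Type*} {l l' : List γ} {x : γ} (d : γ) (hl : l ≠ []) :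
    l' ++ [x] = l ↔ x = l.getLastD d ∧ l' = l.dropLast := by
  constructor
  · rintro rfl
    simp
  · rintro ⟨rfl, rfl⟩
    rw [getLastD_eq_getLast d hl]
    exact List.dropLast_append_getLast hl

lemma isOPSh_append_singleton_iff {r : ℕ} {β α : List ℕ} (hαpos : ∀ a ∈ α, 0 < a)
    (hk : α ≠ []) {π : List (Finset ℕ)} {S : Finset ℕ} :
    IsOPSh r β α (π ++ [S]) ↔
      (S ⊆ Finset.Icc 1 β.length ∧ S.card = α.getLastD 0 ∧ ∀ i ∈ S, 1 ≤ β.getD (i - 1) 0) ∧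
        IsOPallSh r (subInd β S) α.dropLast π := by
  simp only [IsOPSh, IsOPallSh, List.getLastD_concat, List.map_append, List.map_singleton,
    List.sum_append, List.sum_singleton, List.forall_mem_append, List.forall_mem_singleton,
    append_singleton_eq_iff 0 hk]
  constructor
  · rintro ⟨⟨⟨hne, -⟩, hsum, hcard, hshape⟩, h0⟩
    have hb : ∀ i ∈ S, 1 ≤ β.getD (i - 1) 0 := fun i hi => by
      have := Multiset.count_le_of_le i (hsum ▸ le_add_self : S.val ≤ content r β)
      rwa [count_content, Multiset.count_eq_one_of_mem S.nodup hi,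
        if_neg (ne_of_mem_of_not_mem hi h0)] at this
    refine ⟨⟨fun i hi => Finset.mem_Icc.2 ⟨?_, ?_⟩, hcard, hb⟩, hne,
      add_right_cancel (hsum.trans (content_subInd_add h0 hb r).symm), hshape⟩
    · exact Nat.pos_of_ne_zero (ne_of_mem_of_not_mem hi h0)
    · by_contra hlen
      have := hb i hi
      rw [List.getD_eq_default _ _ (by omega)] at this
      omega
  · rintro ⟨⟨hS, hcard, hb⟩, hne, hsum, hshape⟩
    have h0 : 0 ∉ S := fun h => by simpa using hS h
    have hlast : α.getLastD 0 ∈ α := getLastD_eq_getLast 0 hk ▸ List.getLast_mem hk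
    exact ⟨⟨⟨hne, Finset.card_pos.1 (hcard ▸ hαpos _ hlast)⟩,
      by rw [hsum, content_subInd_add h0 hb], hcard, hshape⟩, h0⟩

end omp

theorem inv_shape_recursion_general (r : ℕ) (β α : List ℕ) (hαpos : ∀ a ∈ α, 0 < a) (hk : α ≠ []) :
    omp.DSh r β α omp.inv =
      ∑ S ∈ (Finset.Icc 1 β.length).powerset.filter
          (fun S => S.card = α.getLastD 0 ∧ ∀ i ∈ S, 1 ≤ β.getD (i - 1) 0),
        Polynomial.X ^ omp.wExp β S *
          omp.DallSh r (omp.subInd β S) α.dropLast omp.inv := by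
  classical
  have hfin := omp.finite_setOf_isOPallSh r
  have hfinSh : {π | omp.IsOPSh r β α π}.Finite := (hfin β α).subset fun _ h => h.1
  simp only [omp.DSh, omp.DallSh, finsum_mem_eq_finite_toFinset_sum _ hfinSh,
    finsum_mem_eq_finite_toFinset_sum _ (hfin _ _), Finset.mul_sum, ← pow_add]
  rw [Finset.sum_sigma']
  have hsplit : ∀ π, omp.IsOPSh r β α π → π.dropLast ++ [π.getLastD ∅] = π := fun π hπ =>
    (omp.append_singleton_eq_iff ∅ fun h => hk (by rw [← hπ.1.2.2, h, List.map_nil])).2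
      ⟨rfl, rfl⟩
  refine Finset.sum_nbij' (fun π => ⟨π.getLastD ∅, π.dropLast⟩) (fun x => x.2 ++ [x.1])
    (fun π hπ => ?_) (fun x hx => ?_) (fun π hπ => hsplit π (hfinSh.mem_toFinset.1 hπ))
    (fun x _ => by simp) (fun π hπ => ?_)
  · have hπ : omp.IsOPSh r β α π := hfinSh.mem_toFinset.1 hπ
    rw [← hsplit π hπ, omp.isOPSh_append_singleton_iff hαpos hk] at hπ
    simpa only [Finset.mem_sigma, Finset.mem_filter, Finset.mem_powerset,
      Set.Finite.mem_toFinset, Set.mem_ofPred_eq] using hπ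
  · obtain ⟨S, π⟩ := x
    simp only [Finset.mem_sigma, Finset.mem_filter, Finset.mem_powerset,
      Set.Finite.mem_toFinset, Set.mem_ofPred_eq] at hx
    exact hfinSh.mem_toFinset.2 ((omp.isOPSh_append_singleton_iff hαpos hk).2 hx)
  · have hπ : omp.IsOPSh r β α π := hfinSh.mem_toFinset.1 hπ
    have hπ' := hsplit π hπ
    rw [← hπ', omp.isOPSh_append_singleton_iff hαpos hk] at hπ
    conv_lhs => rw [← hπ', omp.inv_append_singleton_of_sum_eq hπ.2.2.1]

/-- The shape-refined recursion for `inv`: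
`D^{inv}_{r;β,α} = Σ_S q^{Σ_{i=min(S)+1}^m (β_i − χ_S(i))} · D^{inv+}_{r;β−χ_S,α^-}`,
summed over `S ⊆ {1,…,m}` with `|S| = α_k` and `χ_S ≤ β`. -/
theorem inv_shape_recursion (n r : ℕ) (β α : List ℕ) (hβ : β.sum = n)
    (hα : α.sum = n + r) (hαpos : ∀ a ∈ α, 0 < a) (hk : α ≠ []) :
    omp.DSh r β α omp.inv =
      ∑ S ∈ (Finset.Icc 1 β.length).powerset.filter
          (fun S => S.card = α.getLastD 0 ∧ ∀ i ∈ S, 1 ≤ β.getD (i - 1) 0),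
        Polynomial.X ^ omp.wExp β S *
          omp.DallSh r (omp.subInd β S) α.dropLast omp.inv :=
  inv_shape_recursion_general r β α hαpos hk
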